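/- Let ℋ be a complex Hilbert space, H a bounded non-negative self-adjoint operator on ℋ, 𝔥 ⊆ ℋ a closed subspace with orthogonal projection P onto 𝔥, and K the compression of H to 𝔥. Let φ : [0,∞) → ℂ be a continuous admissible function. If the operator T = √H ∘ P (with √H the square root of H given by the continuous functional calculus) is compact, then for every t₀ > 0, ‖(P φ((t/n)H) P)^n − exp(−itK)‖_{B(𝔥)} → 0 as n → ∞, uniformly in t ∈ [0, t₀]. -/

import Mathlib

open Filter Topology

set_option maxHeartbeats 1000000
set_option synthInstance.maxHeartbeats 400000

set_option linter.unusedSectionVars false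

section Aux
variable {𝔸 : Type*} [NormedRing 𝔸] [NormedAlgebra ℂ 𝔸] [CompleteSpace 𝔸]

lemma zeno_aux_norm_term (x : 𝔸) (h1 : ‖(1 : 𝔸)‖ ≤ 1) (n : ℕ) :
    ‖((n.factorial : ℂ))⁻¹ • x ^ n‖ ≤ ‖x‖ ^ n / n.factorial := by
  rw [norm_smul, norm_inv, Complex.norm_natCast, div_eq_mul_inv, mul_comm]
  gcongr
  cases n with
  | zero => simpa using h1
  | succ m => exact norm_pow_le' x (Nat.succ_pos m)

lemma zeno_aux_norm_exp_le (x : 𝔸) (h1 : ‖(1 : 𝔸)‖ ≤ 1) :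
    ‖NormedSpace.exp x‖ ≤ Real.exp ‖x‖ := by
  have hsum : HasSum (fun n : ℕ => ‖x‖ ^ n / n.factorial) (Real.exp ‖x‖) := by
    rw [Real.exp_eq_exp_ℝ]
    exact NormedSpace.expSeries_div_hasSum_exp ‖x‖
  rw [NormedSpace.exp_eq_tsum ℂ]
  exact tsum_of_norm_bounded hsum (zeno_aux_norm_term x h1)

lemma zeno_aux_norm_exp_sub (x : 𝔸) :
    ‖NormedSpace.exp x - 1 - x‖ ≤ ‖x‖ ^ 2 * Real.exp ‖x‖ := by
  have hs : Summable fun n : ℕ => ((n.factorial : ℂ))⁻¹ • x ^ n :=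
    NormedSpace.expSeries_summable' x
  have hs1 : Summable fun n : ℕ => (((n + 1).factorial : ℂ))⁻¹ • x ^ (n + 1) :=
    (summable_nat_add_iff 1).mpr hs
  have key : NormedSpace.exp x - 1 - x
      = ∑' n : ℕ, (((n + 2).factorial : ℂ))⁻¹ • x ^ (n + 2) := by
    have h0 := congrFun (NormedSpace.exp_eq_tsum (𝕂 := ℂ) (𝔸 := 𝔸)) x
    rw [h0, Summable.tsum_eq_zero_add hs, Summable.tsum_eq_zero_add hs1]
    have e1 : (((Nat.factorial 0 : ℕ)) : ℂ)⁻¹ • x ^ 0 = 1 := by norm_num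
    have e2 : (((Nat.factorial (0 + 1) : ℕ)) : ℂ)⁻¹ • x ^ (0 + 1) = x := by norm_num
    rw [e1, e2]
    have e3 : (fun n : ℕ => (((Nat.factorial (n + 1 + 1) : ℕ)) : ℂ)⁻¹ • x ^ (n + 1 + 1))
        = fun n : ℕ => (((Nat.factorial (n + 2) : ℕ)) : ℂ)⁻¹ • x ^ (n + 2) := rfl
    rw [e3]
    abel
  rw [key]
  have hsum : HasSum (fun n : ℕ => ‖x‖ ^ 2 * (‖x‖ ^ n / n.factorial))
      (‖x‖ ^ 2 * Real.exp ‖x‖) := by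
    have : HasSum (fun n : ℕ => ‖x‖ ^ n / n.factorial) (Real.exp ‖x‖) := by
      rw [Real.exp_eq_exp_ℝ]; exact NormedSpace.expSeries_div_hasSum_exp ‖x‖
    exact this.mul_left _
  refine tsum_of_norm_bounded hsum fun n => ?_
  have h2 : ‖((((n + 2).factorial : ℕ)) : ℂ)⁻¹ • x ^ (n + 2)‖
      ≤ (((n + 2).factorial : ℝ))⁻¹ * ‖x‖ ^ (n + 2) := by
    rw [norm_smul, norm_inv, Complex.norm_natCast]
    gcongr
    exact norm_pow_le' x (Nat.succ_pos _)
  refine h2.trans ?_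
  have hfact : ((n.factorial : ℝ)) ≤ ((n + 2).factorial : ℝ) := by
    exact_mod_cast Nat.factorial_le (by omega)
  have hfact0 : (0:ℝ) < (n.factorial : ℝ) := by positivity
  calc (((n + 2).factorial : ℝ))⁻¹ * ‖x‖ ^ (n + 2)
      ≤ ((n.factorial : ℝ))⁻¹ * ‖x‖ ^ (n + 2) := by gcongr
    _ = ‖x‖ ^ 2 * (‖x‖ ^ n / n.factorial) := by ring

lemma zeno_aux_pow_sub_pow (A B : 𝔸) (b : ℝ) (h1 : ‖(1 : 𝔸)‖ ≤ 1)
    (hA : ‖A‖ ≤ 1) (hB : ‖B‖ ≤ b) (hb : 1 ≤ b) :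
    ∀ n : ℕ, ‖A ^ n - B ^ n‖ ≤ n * b ^ n * ‖A - B‖ := by
  have hb0 : 0 ≤ b := le_trans zero_le_one hb
  have hBn : ∀ n : ℕ, ‖B ^ n‖ ≤ b ^ n := by
    intro n
    cases n with
    | zero => simpa using h1
    | succ m => exact (norm_pow_le' B (Nat.succ_pos m)).trans (by gcongr)
  intro n
  induction n with
  | zero => simp
  | succ m ih =>
    have hdecomp : A ^ (m + 1) - B ^ (m + 1) = A * (A ^ m - B ^ m) + (A - B) * B ^ m := by
      rw [pow_succ', pow_succ']
      noncomm_ring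
    calc ‖A ^ (m + 1) - B ^ (m + 1)‖
        ≤ ‖A * (A ^ m - B ^ m)‖ + ‖(A - B) * B ^ m‖ := hdecomp ▸ norm_add_le _ _
      _ ≤ ‖A‖ * ‖A ^ m - B ^ m‖ + ‖A - B‖ * ‖B ^ m‖ :=
          add_le_add (norm_mul_le _ _) (norm_mul_le _ _)
      _ ≤ 1 * (m * b ^ m * ‖A - B‖) + ‖A - B‖ * b ^ m :=
          add_le_add
            (mul_le_mul hA ih (norm_nonneg _) zero_le_one)
            (mul_le_mul_of_nonneg_left (hBn m) (norm_nonneg _))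
      _ ≤ (m + 1 : ℕ) * b ^ (m + 1) * ‖A - B‖ := by
          have hbm : b ^ m ≤ b ^ (m + 1) := by
            calc b ^ m = 1 * b ^ m := (one_mul _).symm
            _ ≤ b * b ^ m := by gcongr
            _ = b ^ (m + 1) := (pow_succ' b m).symm
          have hd : (0:ℝ) ≤ ‖A - B‖ := norm_nonneg _
          calc 1 * (m * b ^ m * ‖A - B‖) + ‖A - B‖ * b ^ m
              = ((m : ℝ) * b ^ m + b ^ m) * ‖A - B‖ := by ring
            _ ≤ ((m : ℝ) * b ^ (m + 1) + b ^ (m + 1)) * ‖A - B‖ := by gcongr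
            _ = (m + 1 : ℕ) * b ^ (m + 1) * ‖A - B‖ := by push_cast; ring

end Aux

/-- **Corollary 3.2(i)** (bounded case). The closed subspace `𝔥 ⊆ ℋ` is modelled by a
Hilbert space `𝔥` with a linear isometric embedding `J : 𝔥 → ℋ`; `P = J*` is the
orthogonal projection onto `𝔥`, characterized by `⟪P g, f⟫ = ⟪g, J f⟫`. For a bounded
non-negative self-adjoint `H`, compression `K = P H J`, and a continuous admissible `φ`,
if `T = √H ∘ P` (here `f ↦ √H (J f)`) is a compact operator then
`(P φ((t/n)H) P)ⁿ → exp(-itK)` in operator norm as `n → ∞`, uniformly in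
`t ∈ [0, t₀]`. -/
theorem zeno_product_formula_norm_convergence_compact
    {ℋ : Type*} [NormedAddCommGroup ℋ] [InnerProductSpace ℂ ℋ] [CompleteSpace ℋ]
    {𝔥 : Type*} [NormedAddCommGroup 𝔥] [InnerProductSpace ℂ 𝔥] [CompleteSpace 𝔥]
    (J : 𝔥 →ₗᵢ[ℂ] ℋ) (P : ℋ →L[ℂ] 𝔥)
    (hP : ∀ (g : ℋ) (f : 𝔥), (inner ℂ (P g) f : ℂ) = inner ℂ g (J f))
    (Hop : ℋ →L[ℂ] ℋ) (hsa : IsSelfAdjoint Hop)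
    (hpos : ∀ g : ℋ, 0 ≤ (inner ℂ (Hop g) g : ℂ).re)
    (K : 𝔥 →L[ℂ] 𝔥) (hK : ∀ f : 𝔥, K f = P (Hop (J f)))
    (φ : ℝ → ℂ) (hφc : Continuous φ)
    (hφb : ∀ x : ℝ, 0 ≤ x → ‖φ x‖ ≤ 1) (hφ0 : φ 0 = 1)
    (hφd : Tendsto (fun x : ℝ => (φ x - 1) / (x : ℂ)) (𝓝[>] 0) (𝓝 (-Complex.I)))
    (hT : IsCompactOperator (fun f : 𝔥 => cfc Real.sqrt Hop (J f)))
    (F : ℝ → (𝔥 →L[ℂ] 𝔥))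
    (hF : ∀ (τ : ℝ) (f : 𝔥),
      F τ f = P (cfc (fun z : ℂ => φ (τ * z.re)) Hop (J f))) :
    ∀ t₀ : ℝ, 0 < t₀ →
      TendstoUniformlyOn (fun (n : ℕ) (t : ℝ) => (F (t / n)) ^ n)
        (fun t : ℝ => NormedSpace.exp ((-(Complex.I * (t : ℂ))) • K))
        atTop (Set.Icc 0 t₀) := by
  intro t₀ ht₀
  -- trivial case: `ℋ` (hence `𝔥`) is a subsingleton
  rcases subsingleton_or_nontrivial ℋ with hsub | hnt
  · haveI : Subsingleton 𝔥 := J.injective.subsingleton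
    haveI : Subsingleton (𝔥 →L[ℂ] 𝔥) :=
      ⟨fun f g => ContinuousLinearMap.ext fun x => Subsingleton.elim _ _⟩
    rw [Metric.tendstoUniformlyOn_iff]
    intro ε hε
    filter_upwards with n t ht
    rw [Subsingleton.elim (NormedSpace.exp ((-(Complex.I * (t : ℂ))) • K)) ((F (t / n)) ^ n),
      dist_self]
    exact hε
  haveI : NormOneClass (ℋ →L[ℂ] ℋ) := ⟨ContinuousLinearMap.norm_id⟩
  haveI hstar : IsStarNormal Hop := hsa.isStarNormal
  -- basic facts about `P` and `J`
  have hPn : ∀ g : ℋ, ‖P g‖ ≤ ‖g‖ := by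
    intro g
    rcases eq_or_lt_of_le (norm_nonneg (P g)) with h0 | h0
    · rw [← h0]; exact norm_nonneg g
    have key : ‖P g‖ * ‖P g‖ ≤ ‖g‖ * ‖P g‖ := by
      calc ‖P g‖ * ‖P g‖ = RCLike.re (inner ℂ (P g) (P g) : ℂ) :=
            (inner_self_eq_norm_mul_norm (𝕜 := ℂ) (P g)).symm
        _ ≤ ‖(inner ℂ (P g) (P g) : ℂ)‖ := RCLike.re_le_norm _
        _ = ‖(inner ℂ g (J (P g)) : ℂ)‖ := by rw [hP]
        _ ≤ ‖g‖ * ‖J (P g)‖ := norm_inner_le_norm _ _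
        _ = ‖g‖ * ‖P g‖ := by rw [J.norm_map]
    exact le_of_mul_le_mul_right key h0
  have hPJ : ∀ f : 𝔥, P (J f) = f := by
    intro f
    refine ext_inner_right ℂ fun g => ?_
    rw [hP, J.inner_map_map]
  -- spectrum facts
  have hHnn : (0 : ℋ →L[ℂ] ℋ) ≤ Hop :=
    (ContinuousLinearMap.nonneg_iff_isPositive Hop).mpr ⟨ContinuousLinearMap.isSelfAdjoint_iff_isSymmetric.mp hsa, fun x => hpos x⟩
  have hspec : ∀ z ∈ spectrum ℂ Hop, z = (z.re : ℂ) ∧ 0 ≤ z.re ∧ z.re ≤ ‖Hop‖ := by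
    intro z hz
    refine ⟨hsa.mem_spectrum_eq_re hz, ?_, ?_⟩
    · have := spectrum_nonneg_of_nonneg hHnn (hsa.spectrumRestricts.apply_mem hz)
      simpa using this
    · refine le_trans (le_abs_self _) (le_trans (Complex.abs_re_le_norm z) ?_)
      exact spectrum.norm_le_norm_of_mem hz
  -- the admissibility estimate
  have hφsmall : ∀ e : ℝ, 0 < e → ∃ δ : ℝ, 0 < δ ∧
      ∀ s : ℝ, 0 ≤ s → s ≤ δ → ‖φ s - 1 + Complex.I * s‖ ≤ e * s := by
    intro e he
    rw [Metric.tendsto_nhdsWithin_nhds] at hφd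
    obtain ⟨δ, hδpos, hδ⟩ := hφd e he
    refine ⟨δ / 2, by positivity, fun s hs0 hsδ => ?_⟩
    rcases hs0.eq_or_lt with heq | hs
    · simp [← heq, hφ0]
    · have hd : dist ((φ s - 1) / (s : ℂ)) (-Complex.I) < e := by
        refine hδ (Set.mem_Ioi.mpr hs) ?_
        rw [Real.dist_eq, sub_zero, abs_of_pos hs]
        linarith
      have hne : (s : ℂ) ≠ 0 := by exact_mod_cast hs.ne'
      have hrw : φ s - 1 + Complex.I * s = ((φ s - 1) / (s : ℂ) - (-Complex.I)) * s := by
        field_simp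
        ring
      rw [hrw, norm_mul, Complex.norm_real, Real.norm_eq_abs, abs_of_nonneg hs0]
      have hlt : ‖(φ s - 1) / (s : ℂ) - (-Complex.I)‖ < e := by rwa [dist_eq_norm] at hd
      exact mul_le_mul_of_nonneg_right hlt.le hs0
  -- continuity of the symbols
  have hg_cont : ∀ τ : ℝ, Continuous fun z : ℂ => φ (τ * z.re) := fun τ =>
    hφc.comp (continuous_const.mul Complex.continuous_re)
  -- norm bound on F τ
  have hFnorm : ∀ τ : ℝ, 0 ≤ τ → ‖F τ‖ ≤ 1 := by
    intro τ hτ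
    have hc : ‖cfc (fun z : ℂ => φ (τ * z.re)) Hop‖ ≤ 1 :=
      norm_cfc_le zero_le_one fun z hz => hφb _ (mul_nonneg hτ (hspec z hz).2.1)
    refine ContinuousLinearMap.opNorm_le_bound _ zero_le_one fun f => ?_
    rw [hF]
    calc ‖P (cfc (fun z : ℂ => φ (τ * z.re)) Hop (J f))‖
        ≤ ‖cfc (fun z : ℂ => φ (τ * z.re)) Hop (J f)‖ := hPn _
      _ ≤ ‖cfc (fun z : ℂ => φ (τ * z.re)) Hop‖ * ‖J f‖ := ContinuousLinearMap.le_opNorm _ _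
      _ ≤ 1 * ‖f‖ := by rw [J.norm_map]; exact mul_le_mul_of_nonneg_right hc (norm_nonneg f)
      _ = 1 * ‖f‖ := rfl
  -- the key linear approximation of F τ
  have hmain1 : ∀ e δ : ℝ, 0 < e →
      (∀ s : ℝ, 0 ≤ s → s ≤ δ → ‖φ s - 1 + Complex.I * s‖ ≤ e * s) →
      ∀ τ : ℝ, 0 ≤ τ → τ * ‖Hop‖ ≤ δ →
      ‖F τ - (1 - (Complex.I * (τ : ℂ)) • K)‖ ≤ e * (τ * ‖Hop‖) := by
    intro e δ he hδ τ hτ hτδ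
    set c : ℂ := Complex.I * (τ : ℂ) with hc
    set D := cfc (fun z : ℂ => φ (τ * z.re) - 1 + c * z) Hop with hD
    have hc1 : ContinuousOn (fun z : ℂ => φ (τ * z.re) - 1) (spectrum ℂ Hop) :=
      ((hg_cont τ).sub continuous_const).continuousOn
    have hc2 : ContinuousOn (fun z : ℂ => c * z) (spectrum ℂ Hop) :=
      (continuous_const.mul continuous_id).continuousOn
    have hc3 : ContinuousOn (fun z : ℂ => φ (τ * z.re)) (spectrum ℂ Hop) :=
      (hg_cont τ).continuousOn
    have hc4 : ContinuousOn (fun _ : ℂ => (1 : ℂ)) (spectrum ℂ Hop) :=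
      continuousOn_const
    have hsplit : D = cfc (fun z : ℂ => φ (τ * z.re)) Hop - 1 + c • Hop := by
      rw [hD, cfc_add (a := Hop) (fun z : ℂ => φ (τ * z.re) - 1) (fun z : ℂ => c * z) hc1 hc2,
        cfc_sub (fun z : ℂ => φ (τ * z.re)) (fun _ : ℂ => (1 : ℂ)) Hop hc3 hc4,
        cfc_const_mul_id c Hop, cfc_const (1 : ℂ) Hop, map_one]
    have hcfc : cfc (fun z : ℂ => φ (τ * z.re)) Hop = 1 - c • Hop + D := by
      rw [hsplit]; abel
    have happly : ∀ f : 𝔥, (F τ - (1 - c • K)) f = P (D (J f)) := by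
      intro f
      simp only [ContinuousLinearMap.sub_apply, ContinuousLinearMap.one_apply,
        ContinuousLinearMap.smul_apply]
      rw [hF τ f, hcfc]
      simp only [ContinuousLinearMap.add_apply, ContinuousLinearMap.sub_apply,
        ContinuousLinearMap.one_apply, ContinuousLinearMap.smul_apply, map_add, map_sub,
        map_smul, hPJ, ← hK]
      abel
    have hDnorm : ‖D‖ ≤ e * (τ * ‖Hop‖) := by
      refine norm_cfc_le (by positivity) fun z hz => ?_
      obtain ⟨hz1, hz2, hz3⟩ := hspec z hz
      have hs0 : 0 ≤ τ * z.re := mul_nonneg hτ hz2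
      have hsδ : τ * z.re ≤ δ :=
        le_trans (mul_le_mul_of_nonneg_left hz3 hτ) hτδ
      have hlast : c * z = Complex.I * ((τ * z.re : ℝ) : ℂ) := by
        rw [hc]
        conv_lhs => rw [hz1]
        push_cast
        ring
      rw [hlast]
      refine le_trans (hδ _ hs0 hsδ) ?_
      exact mul_le_mul_of_nonneg_left (mul_le_mul_of_nonneg_left hz3 hτ) he.le
    refine ContinuousLinearMap.opNorm_le_bound _ (by positivity) fun f => ?_
    rw [happly f]
    calc ‖P (D (J f))‖ ≤ ‖D (J f)‖ := hPn _
      _ ≤ ‖D‖ * ‖J f‖ := ContinuousLinearMap.le_opNorm _ _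
      _ = ‖D‖ * ‖f‖ := by rw [J.norm_map]
      _ ≤ e * (τ * ‖Hop‖) * ‖f‖ := mul_le_mul_of_nonneg_right hDnorm (norm_nonneg _)
  -- constants
  set M : ℝ := ‖Hop‖ with hM
  set kK : ℝ := ‖K‖ with hkK
  have hM0 : 0 ≤ M := norm_nonneg _
  have hkK0 : 0 ≤ kK := norm_nonneg _
  set C : ℝ := Real.exp (t₀ * kK) with hC
  have hC1 : 1 ≤ C := Real.one_le_exp (by positivity)
  have hC0 : 0 < C := lt_of_lt_of_le zero_lt_one hC1
  have h1le : ‖(1 : 𝔥 →L[ℂ] 𝔥)‖ ≤ 1 := by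
    rw [ContinuousLinearMap.one_def]; exact ContinuousLinearMap.norm_id_le
  -- main convergence
  rw [Metric.tendstoUniformlyOn_iff]
  intro ε hε
  set e : ℝ := ε / (4 * C * (t₀ * M + 1)) with he_def
  have he : 0 < e := by positivity
  obtain ⟨δ, hδpos, hδ⟩ := hφsmall e he
  obtain ⟨N₀, hN₀⟩ := exists_nat_gt (max (t₀ * M / δ) (2 * (C ^ 2 * t₀ ^ 2 * kK ^ 2) / ε))
  rw [eventually_atTop]
  refine ⟨N₀ + 1, fun n hn t ht => ?_⟩
  obtain ⟨ht0, htt₀⟩ := ht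
  have hn1 : 1 ≤ n := le_trans (Nat.le_add_left 1 N₀) hn
  have hnpos : (0 : ℝ) < (n : ℝ) := by exact_mod_cast Nat.pos_of_ne_zero (by omega)
  have hnne : (n : ℝ) ≠ 0 := hnpos.ne'
  have hN₀n : (N₀ : ℝ) ≤ (n : ℝ) := by exact_mod_cast le_trans (Nat.le_succ N₀) hn
  set τ : ℝ := t / n with hτdef
  have hτ0 : 0 ≤ τ := div_nonneg ht0 hnpos.le
  have hτt : τ ≤ t := div_le_self ht0 (by exact_mod_cast hn1)
  have hτt₀ : τ ≤ t₀ := le_trans hτt htt₀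
  have hnτ : (n : ℝ) * τ = t := by rw [hτdef]; field_simp
  have hτδ : τ * M ≤ δ := by
    have h1 : τ * M ≤ t₀ * M / n := by
      rw [hτdef, div_mul_eq_mul_div, div_le_div_iff₀ hnpos hnpos]
      have : t * M ≤ t₀ * M := mul_le_mul_of_nonneg_right htt₀ hM0
      nlinarith
    refine le_trans h1 ?_
    rw [div_le_iff₀ hnpos]
    have h2 : t₀ * M / δ < (N₀ : ℝ) := lt_of_le_of_lt (le_max_left _ _) hN₀
    have h3 : t₀ * M < δ * N₀ := by
      rw [div_lt_iff₀ hδpos] at h2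
      linarith
    nlinarith
  -- the three operators
  set A : 𝔥 →L[ℂ] 𝔥 := (-(Complex.I * (τ : ℂ))) • K with hA
  set E : 𝔥 →L[ℂ] 𝔥 := NormedSpace.exp A with hE
  have hAnorm : ‖A‖ = τ * kK := by
    rw [hA, norm_smul, norm_neg, norm_mul, Complex.norm_I, one_mul, Complex.norm_real,
      Real.norm_eq_abs, abs_of_nonneg hτ0]
  have hGE : ‖(1 - (Complex.I * (τ : ℂ)) • K) - E‖ ≤ (τ * kK) ^ 2 * C := by
    have h1 : (1 - (Complex.I * (τ : ℂ)) • K) - E = -(E - 1 - A) := by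
      rw [hA, neg_smul]; abel
    rw [h1, norm_neg]
    refine le_trans (zeno_aux_norm_exp_sub A) ?_
    rw [hAnorm]
    have : Real.exp (τ * kK) ≤ C := by
      rw [hC]; exact Real.exp_le_exp.mpr (mul_le_mul_of_nonneg_right hτt₀ hkK0)
    exact mul_le_mul_of_nonneg_left this (by positivity)
  have hFG : ‖F τ - (1 - (Complex.I * (τ : ℂ)) • K)‖ ≤ e * (τ * M) :=
    hmain1 e δ he hδ τ hτ0 hτδ
  have hFE : ‖F τ - E‖ ≤ e * (τ * M) + (τ * kK) ^ 2 * C := by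
    calc ‖F τ - E‖ = ‖(F τ - (1 - (Complex.I * (τ : ℂ)) • K))
          + ((1 - (Complex.I * (τ : ℂ)) • K) - E)‖ := by rw [sub_add_sub_cancel]
      _ ≤ ‖F τ - (1 - (Complex.I * (τ : ℂ)) • K)‖
          + ‖(1 - (Complex.I * (τ : ℂ)) • K) - E‖ := norm_add_le _ _
      _ ≤ e * (τ * M) + (τ * kK) ^ 2 * C := add_le_add hFG hGE
  set b : ℝ := Real.exp (τ * kK) with hb
  have hb1 : 1 ≤ b := Real.one_le_exp (by positivity)
  have hEnorm : ‖E‖ ≤ b := by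
    rw [hE, hb, ← hAnorm]
    exact zeno_aux_norm_exp_le A h1le
  have hpow := zeno_aux_pow_sub_pow (F τ) E b h1le (hFnorm τ hτ0) hEnorm hb1 n
  have hbn : b ^ n ≤ C := by
    rw [hb, ← Real.exp_nat_mul, hC]
    refine Real.exp_le_exp.mpr ?_
    calc (n : ℝ) * (τ * kK) = ((n : ℝ) * τ) * kK := by ring
      _ = t * kK := by rw [hnτ]
      _ ≤ t₀ * kK := mul_le_mul_of_nonneg_right htt₀ hkK0
  have hscal : (n : ℂ) * (-(Complex.I * (τ : ℂ))) = -(Complex.I * (t : ℂ)) := by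
    have hnc : (n : ℂ) ≠ 0 := by exact_mod_cast hnne
    rw [hτdef]
    push_cast
    field_simp
  have hEn : E ^ n = NormedSpace.exp ((-(Complex.I * (t : ℂ))) • K) := by
    let +nondep : NormedAlgebra ℚ (𝔥 →L[ℂ] 𝔥) := .restrictScalars ℚ ℂ _
    rw [hE, ← NormedSpace.exp_nsmul]
    congr 1
    rw [hA, ← Nat.cast_smul_eq_nsmul ℂ n, smul_smul, hscal]
  -- final estimate
  rw [dist_eq_norm, ← hEn, norm_sub_rev]
  have hτle : τ ≤ t₀ / n := by rw [hτdef]; gcongr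
  have hchain : ‖F τ ^ n - E ^ n‖
      ≤ C * (e * (t₀ * M)) + C * ((t₀ * (t₀ / n)) * kK ^ 2 * C) := by
    calc ‖F τ ^ n - E ^ n‖ ≤ (n : ℝ) * b ^ n * ‖F τ - E‖ := hpow
      _ ≤ (n : ℝ) * b ^ n * (e * (τ * M) + (τ * kK) ^ 2 * C) := by
          refine mul_le_mul_of_nonneg_left hFE ?_
          positivity
      _ = b ^ n * (e * (((n : ℝ) * τ) * M) + (((n : ℝ) * τ) * τ) * kK ^ 2 * C) := by ring
      _ = b ^ n * (e * (t * M) + (t * τ) * kK ^ 2 * C) := by rw [hnτ]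
      _ ≤ C * (e * (t₀ * M) + (t₀ * (t₀ / n)) * kK ^ 2 * C) := by
          have h5 : t * τ ≤ t₀ * (t₀ / n) := mul_le_mul htt₀ hτle hτ0 ht₀.le
          have h6 : e * (t * M) ≤ e * (t₀ * M) :=
            mul_le_mul_of_nonneg_left (mul_le_mul_of_nonneg_right htt₀ hM0) he.le
          have h7 : (t * τ) * kK ^ 2 * C ≤ (t₀ * (t₀ / n)) * kK ^ 2 * C := by
            refine mul_le_mul_of_nonneg_right (mul_le_mul_of_nonneg_right h5 ?_) hC0.le
            positivity
          have h8 : 0 ≤ e * (t * M) + (t * τ) * kK ^ 2 * C := by positivity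
          exact mul_le_mul hbn (add_le_add h6 h7) h8 hC0.le
      _ = C * (e * (t₀ * M)) + C * ((t₀ * (t₀ / n)) * kK ^ 2 * C) := by ring
  have hfirst : C * (e * (t₀ * M)) ≤ ε / 4 := by
    have heq : e * (C * (t₀ * M + 1)) = ε / 4 := by
      rw [he_def]
      field_simp
    calc C * (e * (t₀ * M)) = e * (C * (t₀ * M)) := by ring
      _ ≤ e * (C * (t₀ * M + 1)) := by
          refine mul_le_mul_of_nonneg_left ?_ he.le
          refine mul_le_mul_of_nonneg_left ?_ hC0.le
          linarith
      _ = ε / 4 := heq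
  have hsecond : C * ((t₀ * (t₀ / n)) * kK ^ 2 * C) < ε / 2 := by
    have heq2 : C * ((t₀ * (t₀ / n)) * kK ^ 2 * C) = (C ^ 2 * t₀ ^ 2 * kK ^ 2) / n := by
      field_simp
    rw [heq2]
    have h9 : 2 * (C ^ 2 * t₀ ^ 2 * kK ^ 2) / ε < (N₀ : ℝ) :=
      lt_of_le_of_lt (le_max_right _ _) hN₀
    have h10 : 2 * (C ^ 2 * t₀ ^ 2 * kK ^ 2) < ε * (n : ℝ) := by
      rw [div_lt_iff₀ hε] at h9
      nlinarith
    rw [div_lt_iff₀ hnpos]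
    linarith
  calc ‖F τ ^ n - E ^ n‖ ≤ C * (e * (t₀ * M)) + C * ((t₀ * (t₀ / n)) * kK ^ 2 * C) := hchain
    _ < ε / 4 + ε / 2 := add_lt_add_of_le_of_lt hfirst hsecond
    _ < ε := by linarith
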